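/- arXiv:2005.00046 — 7 statements merged into one kernel-verified Lean document; each statement's English description precedes it below -/
import Mathlib

section
/- For a single-mode covariance matrix parametrized by purity μ_c ∈ (0,1] and squeezing parameter μ_sc ∈ (0,1], the smallest eigenvalue λ_- = (1 - sqrt(1 - μ_sc²))/(2 μ_c μ_sc) is strictly less than 1/2 if and only if μ_sc < 2 μ_c/(1 + μ_c²). -/
open Real

/-- for purity `μc ∈ (0,1]` and squeezing parameter `μsc ∈ (0,1]`, the least
eigenvalue `λ₋ = (1 - √(1 - μsc²))/(2 μc μsc)` of the single-mode covariance matrix is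
strictly less than `1/2` iff `μsc < 2 μc/(1 + μc²)`. -/
theorem least_eigenvalue_lt_half_iff (μc μsc : ℝ)
    (hμc : 0 < μc) (hμc1 : μc ≤ 1) (hμsc : 0 < μsc) (hμsc1 : μsc ≤ 1) :
    (1 - Real.sqrt (1 - μsc ^ 2)) / (2 * μc * μsc) < 1 / 2 ↔
      μsc < 2 * μc / (1 + μc ^ 2) := by
  have hk : (0:ℝ) ≤ 1 - μsc ^ 2 := by nlinarith
  have hs := Real.sq_sqrt hk
  have hs0 := Real.sqrt_nonneg (1 - μsc ^ 2)
  have h1 : (0:ℝ) ≤ 1 - μc * μsc := by nlinarith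
  rw [div_lt_div_iff₀ (by positivity) (by norm_num), lt_div_iff₀ (by positivity)]
  constructor
  · intro h
    nlinarith [mul_pos hμc hμsc, sq_nonneg (Real.sqrt (1 - μsc ^ 2) - (1 - μc * μsc)),
      mul_nonneg hs0 h1]
  · intro h
    nlinarith [mul_pos hμc hμsc, sq_nonneg (Real.sqrt (1 - μsc ^ 2) - (1 - μc * μsc)),
      mul_nonneg hs0 h1]
end

section
/- Let a, b, c₁, c₂ be reals with a, b > 0. Set σ_M(μ_s) = (1/(2 μ_s)) [[1 + κ_s, 0], [0, 1 - κ_s]] with κ_s = sqrt(1 - μ_s²), μ_s ∈ (0,1]. Then the smallest eigenvalue of σ_c(μ_s) = a·I₂ - diag(c₁, c₂) (b·I₂ + σ_M(μ_s))⁻¹ diag(c₁, c₂) tends to a - c₂²/b as μ_s → 0⁺. -/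
open Matrix Real Filter

noncomputable section

/-- Smallest eigenvalue of a (symmetric) 2×2 real matrix via trace/determinant. -/
def minEig (M : Matrix (Fin 2) (Fin 2) ℝ) : ℝ :=
  (M.trace - Real.sqrt (M.trace ^ 2 - 4 * M.det)) / 2

/-- The squeezed measurement covariance `σM(μs) = (1/(2μs)) diag(1+κs, 1-κs)`,
`κs = √(1-μs²)`. -/
def σMx (μs : ℝ) : Matrix (Fin 2) (Fin 2) ℝ :=
  (1 / (2 * μs)) •
    !![1 + Real.sqrt (1 - μs ^ 2), 0; 0, 1 - Real.sqrt (1 - μs ^ 2)]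

lemma aux_inv_diag2 (x y : ℝ) (hx : x ≠ 0) (hy : y ≠ 0) :
    (Matrix.diagonal ![x, y])⁻¹ = Matrix.diagonal ![x⁻¹, y⁻¹] := by
  apply Matrix.inv_eq_right_inv
  rw [Matrix.diagonal_mul_diagonal]
  ext i j
  fin_cases i <;> fin_cases j <;>
    simp [Matrix.one_apply, mul_inv_cancel₀, hx, hy]

lemma aux_minEig_diag (x y : ℝ) : minEig (Matrix.diagonal ![x, y]) = min x y := by
  have ht : (Matrix.diagonal ![x, y]).trace = x + y := by
    simp [Matrix.trace_fin_two]
  have hd : (Matrix.diagonal ![x, y]).det = x * y := by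
    simp [Matrix.det_fin_two]
  rw [minEig, ht, hd]
  have h : (x + y) ^ 2 - 4 * (x * y) = (x - y) ^ 2 := by ring
  rw [h, Real.sqrt_sq_eq_abs]
  rcases le_total x y with h1 | h1
  · rw [abs_of_nonpos (by linarith), min_eq_left h1]; ring
  · rw [abs_of_nonneg (by linarith), min_eq_right h1]; ring

lemma aux_sum_diag (b μ : ℝ) :
    b • (1 : Matrix (Fin 2) (Fin 2) ℝ) + σMx μ =
      Matrix.diagonal ![b + (1 + Real.sqrt (1 - μ ^ 2)) / (2 * μ),
                        b + (1 - Real.sqrt (1 - μ ^ 2)) / (2 * μ)] := by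
  ext i j
  fin_cases i <;> fin_cases j <;>
    simp [σMx, Matrix.one_apply, div_eq_inv_mul]

lemma aux_cond_diag (a c₁ c₂ x y : ℝ) :
    a • (1 : Matrix (Fin 2) (Fin 2) ℝ) -
      Matrix.diagonal ![c₁, c₂] * Matrix.diagonal ![x, y] * Matrix.diagonal ![c₁, c₂]
    = Matrix.diagonal ![a - c₁ ^ 2 * x, a - c₂ ^ 2 * y] := by
  rw [Matrix.diagonal_mul_diagonal, Matrix.diagonal_mul_diagonal]
  ext i j
  fin_cases i <;> fin_cases j <;> simp [Matrix.one_apply] <;> ring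

/-- the smallest eigenvalue of the conditional covariance matrix
`σc(μs) = a·I₂ - diag(c₁,c₂) (b·I₂ + σM(μs))⁻¹ diag(c₁,c₂)` tends to `a - c₂²/b`
as `μs → 0⁺`. -/
theorem minEig_tendsto_homodyne (a b c₁ c₂ : ℝ) (ha : 0 < a) (hb : 0 < b) :
    Tendsto
      (fun μs : ℝ =>
        minEig (a • (1 : Matrix (Fin 2) (Fin 2) ℝ) -
          Matrix.diagonal ![c₁, c₂] * (b • (1 : Matrix (Fin 2) (Fin 2) ℝ) + σMx μs)⁻¹ *
            Matrix.diagonal ![c₁, c₂]))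
      (nhdsWithin 0 (Set.Ioi 0)) (nhds (a - c₂ ^ 2 / b)) := by
  set d₁ : ℝ → ℝ := fun μ => b + (1 + Real.sqrt (1 - μ ^ 2)) / (2 * μ) with hd₁
  set d₂ : ℝ → ℝ := fun μ => b + (1 - Real.sqrt (1 - μ ^ 2)) / (2 * μ) with hd₂
  have hmem : Set.Ioo (0 : ℝ) 1 ∈ nhdsWithin (0 : ℝ) (Set.Ioi 0) :=
    Ioo_mem_nhdsGT_of_mem (by norm_num : (0 : ℝ) ∈ Set.Ico (0 : ℝ) 1)
  -- basic facts on Ioo 0 1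
  have hfacts : ∀ μ ∈ Set.Ioo (0 : ℝ) 1, 0 < d₁ μ ∧ 0 < d₂ μ := by
    intro μ hμ
    obtain ⟨h0, h1⟩ := hμ
    have hs0 : (0 : ℝ) ≤ Real.sqrt (1 - μ ^ 2) := Real.sqrt_nonneg _
    have hs1 : Real.sqrt (1 - μ ^ 2) ≤ 1 := Real.sqrt_le_one.mpr (by nlinarith)
    have h2μ : (0 : ℝ) < 2 * μ := by linarith
    constructor
    · have : (0 : ℝ) ≤ (1 + Real.sqrt (1 - μ ^ 2)) / (2 * μ) :=
        div_nonneg (by linarith) h2μ.le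
      simp only [hd₁]; linarith
    · have : (0 : ℝ) ≤ (1 - Real.sqrt (1 - μ ^ 2)) / (2 * μ) :=
        div_nonneg (by linarith) h2μ.le
      simp only [hd₂]; linarith
  -- the eventual formula
  have heq : ∀ᶠ μ in nhdsWithin (0 : ℝ) (Set.Ioi 0),
      minEig (a • (1 : Matrix (Fin 2) (Fin 2) ℝ) -
          Matrix.diagonal ![c₁, c₂] * (b • (1 : Matrix (Fin 2) (Fin 2) ℝ) + σMx μ)⁻¹ *
            Matrix.diagonal ![c₁, c₂])
        = min (a - c₁ ^ 2 * (d₁ μ)⁻¹) (a - c₂ ^ 2 * (d₂ μ)⁻¹) := by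
    filter_upwards [hmem] with μ hμ
    obtain ⟨hp1, hp2⟩ := hfacts μ hμ
    rw [aux_sum_diag, aux_inv_diag2 _ _ hp1.ne' hp2.ne', aux_cond_diag, aux_minEig_diag]
  rw [tendsto_congr' heq]
  -- limit of the first branch : → a
  have hlim1 : Tendsto (fun μ => a - c₁ ^ 2 * (d₁ μ)⁻¹)
      (nhdsWithin (0 : ℝ) (Set.Ioi 0)) (nhds a) := by
    have htop : Tendsto d₁ (nhdsWithin (0 : ℝ) (Set.Ioi 0)) atTop := by
      apply tendsto_atTop_mono' _ (f₁ := fun μ : ℝ => b + 1 / (2 * μ))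
      · filter_upwards [self_mem_nhdsWithin] with μ (hμ : 0 < μ)
        have hs0 : (0 : ℝ) ≤ Real.sqrt (1 - μ ^ 2) := Real.sqrt_nonneg _
        have h2μ : (0 : ℝ) < 2 * μ := by linarith
        simp only [hd₁]
        gcongr
        linarith
      · apply tendsto_atTop_add_const_left
        have h := (tendsto_inv_nhdsGT_zero (𝕜 := ℝ)).atTop_div_const
          (by norm_num : (0 : ℝ) < 2)
        refine h.congr fun μ => by field_simp
    have hz : Tendsto (fun μ => c₁ ^ 2 * (d₁ μ)⁻¹)
        (nhdsWithin (0 : ℝ) (Set.Ioi 0)) (nhds (c₁ ^ 2 * 0)) :=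
      (htop.inv_tendsto_atTop).const_mul _
    have := (tendsto_const_nhds (x := a)).sub hz
    simpa using this
  -- limit of the second branch : → a - c₂²/b
  have hrlim : Tendsto (fun μ : ℝ => (1 - Real.sqrt (1 - μ ^ 2)) / (2 * μ))
      (nhdsWithin (0 : ℝ) (Set.Ioi 0)) (nhds 0) := by
    apply tendsto_of_tendsto_of_tendsto_of_le_of_le' (g := fun _ => (0 : ℝ))
      (h := fun μ : ℝ => μ / 2) tendsto_const_nhds
    · have : Tendsto (fun μ : ℝ => μ / 2) (nhds (0 : ℝ)) (nhds 0) := by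
        simpa using (continuous_id.div_const 2).tendsto (0 : ℝ)
      exact this.mono_left nhdsWithin_le_nhds
    · filter_upwards [hmem] with μ hμ
      have h1 : Real.sqrt (1 - μ ^ 2) ≤ 1 := Real.sqrt_le_one.mpr (by nlinarith [hμ.1])
      have h2 : (0 : ℝ) < 2 * μ := by linarith [hμ.1]
      exact div_nonneg (by linarith) h2.le
    · filter_upwards [hmem] with μ hμ
      obtain ⟨h0, h1⟩ := hμ
      have ht : (0 : ℝ) ≤ 1 - μ ^ 2 := by nlinarith
      have hk : 1 - μ ^ 2 ≤ Real.sqrt (1 - μ ^ 2) := by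
        have := Real.sqrt_le_sqrt
          (show (1 - μ ^ 2) ^ 2 ≤ 1 - μ ^ 2 by nlinarith [mul_nonneg ht (sq_nonneg μ)])
        rwa [Real.sqrt_sq ht] at this
      rw [div_le_iff₀ (by linarith)]
      nlinarith
  have hd2lim : Tendsto d₂ (nhdsWithin (0 : ℝ) (Set.Ioi 0)) (nhds b) := by
    have := (tendsto_const_nhds (x := b)).add hrlim
    simpa [hd₂] using this
  have hlim2 : Tendsto (fun μ => a - c₂ ^ 2 * (d₂ μ)⁻¹)
      (nhdsWithin (0 : ℝ) (Set.Ioi 0)) (nhds (a - c₂ ^ 2 / b)) := by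
    have hinv : Tendsto (fun μ => (d₂ μ)⁻¹)
        (nhdsWithin (0 : ℝ) (Set.Ioi 0)) (nhds b⁻¹) := hd2lim.inv₀ hb.ne'
    have := (tendsto_const_nhds (x := a)).sub ((hinv.const_mul (c₂ ^ 2)))
    simpa [div_eq_mul_inv] using this
  have := hlim1.min hlim2
  rwa [min_eq_right (by positivity |> fun h => sub_le_self a h)] at this
end
end

section
/- For a two-mode Gaussian state in canonical form, the symplectic invariants are I₁ = a², I₂ = b², I₃ = c₁c₂, I₄ = (ab - c₁²)(ab - c₂²). The weak nonclassical steering condition a - max(c₁²,c₂²)/b < 1/2 is equivalent to (I₁I₂ - I₃² + I₄ - sqrt((I₁I₂ - I₃² + I₄)² - 4 I₁I₂I₄))/(2 I₂ sqrt(I₁)) < 1/2, assuming a, b > 0. -/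
/-- the weak nonclassical steering condition `a - max(c₁²,c₂²)/b < 1/2` in
terms of the symplectic invariants `I₁ = a²`, `I₂ = b²`, `I₃ = c₁c₂`,
`I₄ = (ab - c₁²)(ab - c₂²)` of a canonical-form two-mode Gaussian state. -/
theorem WNS_symplectic_invariants (a b c₁ c₂ : ℝ) (ha : 0 < a) (hb : 0 < b)
    (hI₄ : max (c₁ ^ 2) (c₂ ^ 2) < a * b) :
    a - max (c₁ ^ 2) (c₂ ^ 2) / b < 1 / 2 ↔
      (a ^ 2 * b ^ 2 - (c₁ * c₂) ^ 2 + (a * b - c₁ ^ 2) * (a * b - c₂ ^ 2) -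
          Real.sqrt ((a ^ 2 * b ^ 2 - (c₁ * c₂) ^ 2 +
              (a * b - c₁ ^ 2) * (a * b - c₂ ^ 2)) ^ 2 -
            4 * (a ^ 2) * (b ^ 2) * ((a * b - c₁ ^ 2) * (a * b - c₂ ^ 2)))) /
        (2 * b ^ 2 * Real.sqrt (a ^ 2)) < 1 / 2 := by
  have h1 : Real.sqrt (a ^ 2) = a := Real.sqrt_sq ha.le
  have h2 : (a ^ 2 * b ^ 2 - (c₁ * c₂) ^ 2 + (a * b - c₁ ^ 2) * (a * b - c₂ ^ 2)) ^ 2 -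
      4 * (a ^ 2) * (b ^ 2) * ((a * b - c₁ ^ 2) * (a * b - c₂ ^ 2)) =
      (a * b * (c₁ ^ 2 - c₂ ^ 2)) ^ 2 := by ring
  rw [h2, h1, Real.sqrt_sq_eq_abs, abs_mul, abs_of_pos (mul_pos ha hb)]
  have hd : (0:ℝ) < 2 * b ^ 2 * a := by positivity
  rw [div_lt_iff₀ hd]
  rcases le_total (c₁ ^ 2) (c₂ ^ 2) with h | h
  · rw [max_eq_right h] at *
    rw [abs_of_nonpos (by linarith)]
    have key : c₂ ^ 2 / b * b = c₂ ^ 2 := div_mul_cancel₀ _ hb.ne'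
    constructor <;> intro hlt <;> nlinarith [key, hb]
  · rw [max_eq_left h] at *
    rw [abs_of_nonneg (by linarith)]
    have key : c₁ ^ 2 / b * b = c₁ ^ 2 := div_mul_cancel₀ _ hb.ne'
    constructor <;> intro hlt <;> nlinarith [key, hb]
end

section
/- For a two-mode Gaussian state in canonical form, the strong nonclassical steering condition a - min(c₁²,c₂²)/b < 1/2 is equivalent to (I₁I₂ - I₃² + I₄ + sqrt((I₁I₂ - I₃² + I₄)² - 4 I₁I₂I₄))/(2 I₂ sqrt(I₁)) < 1/2, in terms of the symplectic invariants I₁ = a², I₂ = b², I₃ = c₁c₂, I₄ = (ab - c₁²)(ab - c₂²), assuming a, b > 0 and ab > max(c₁², c₂²). -/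
/-- the strong nonclassical steering condition `a - min(c₁²,c₂²)/b < 1/2` in
terms of the symplectic invariants `I₁ = a²`, `I₂ = b²`, `I₃ = c₁c₂`,
`I₄ = (ab - c₁²)(ab - c₂²)` of a canonical-form two-mode Gaussian state. -/
theorem SNS_symplectic_invariants (a b c₁ c₂ : ℝ) (ha : 0 < a) (hb : 0 < b)
    (hI₄ : max (c₁ ^ 2) (c₂ ^ 2) < a * b) :
    a - min (c₁ ^ 2) (c₂ ^ 2) / b < 1 / 2 ↔
      (a ^ 2 * b ^ 2 - (c₁ * c₂) ^ 2 + (a * b - c₁ ^ 2) * (a * b - c₂ ^ 2) +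
          Real.sqrt ((a ^ 2 * b ^ 2 - (c₁ * c₂) ^ 2 +
              (a * b - c₁ ^ 2) * (a * b - c₂ ^ 2)) ^ 2 -
            4 * (a ^ 2) * (b ^ 2) * ((a * b - c₁ ^ 2) * (a * b - c₂ ^ 2)))) /
        (2 * b ^ 2 * Real.sqrt (a ^ 2)) < 1 / 2 := by
  have ha2 : Real.sqrt (a ^ 2) = a := Real.sqrt_sq ha.le
  have harg : (a ^ 2 * b ^ 2 - (c₁ * c₂) ^ 2 +
      (a * b - c₁ ^ 2) * (a * b - c₂ ^ 2)) ^ 2 -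
      4 * (a ^ 2) * (b ^ 2) * ((a * b - c₁ ^ 2) * (a * b - c₂ ^ 2))
      = (a * b * (c₁ ^ 2 - c₂ ^ 2)) ^ 2 := by ring
  have hs : Real.sqrt ((a ^ 2 * b ^ 2 - (c₁ * c₂) ^ 2 +
      (a * b - c₁ ^ 2) * (a * b - c₂ ^ 2)) ^ 2 -
      4 * (a ^ 2) * (b ^ 2) * ((a * b - c₁ ^ 2) * (a * b - c₂ ^ 2)))
      = a * b * |c₁ ^ 2 - c₂ ^ 2| := by
    rw [harg, Real.sqrt_sq_eq_abs, abs_mul, abs_mul, abs_of_pos ha, abs_of_pos hb]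
  rw [ha2, hs]
  have hkey : (a ^ 2 * b ^ 2 - (c₁ * c₂) ^ 2 + (a * b - c₁ ^ 2) * (a * b - c₂ ^ 2) +
      a * b * |c₁ ^ 2 - c₂ ^ 2|) / (2 * b ^ 2 * a)
      = a - min (c₁ ^ 2) (c₂ ^ 2) / b := by
    rcases le_total (c₁ ^ 2) (c₂ ^ 2) with h | h
    · rw [abs_of_nonpos (by linarith), min_eq_left h]
      field_simp
      ring
    · rw [abs_of_nonneg (by linarith), min_eq_right h]
      field_simp
      ring
  rw [hkey]
end

section
/- A two-mode squeezed thermal state with parameters N_A, N_B ≥ 0 and r ≥ 0 (covariance entries a = (1+N_A+N_B)cosh(2r)/2 + (N_A - N_B)/2, b = (1+N_A+N_B)cosh(2r)/2 - (N_A - N_B)/2, c = (1+N_A+N_B)sinh(2r)/2) satisfies a - c²/b < 1/2 if and only if cosh(2r) > 1 + 2 N_A (1 + 2 N_B)/(1 + N_A + N_B). -/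
open Real

/-- for a TMST with `N_A, N_B ≥ 0`, `r ≥ 0`, and
`a = (1+N_A+N_B)cosh(2r)/2 + (N_A-N_B)/2`, `b = (1+N_A+N_B)cosh(2r)/2 - (N_A-N_B)/2`,
`c = (1+N_A+N_B)sinh(2r)/2`, the steerability condition `a - c²/b < 1/2` holds iff
`cosh(2r) > 1 + 2 N_A (1 + 2 N_B)/(1 + N_A + N_B)`. -/
theorem TMST_steerability_iff (NA NB r : ℝ) (hNA : 0 ≤ NA) (hNB : 0 ≤ NB) (hr : 0 ≤ r) :
    ((1 + NA + NB) * Real.cosh (2 * r) / 2 + (NA - NB) / 2) -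
        ((1 + NA + NB) * Real.sinh (2 * r) / 2) ^ 2 /
          ((1 + NA + NB) * Real.cosh (2 * r) / 2 - (NA - NB) / 2) < 1 / 2 ↔
      1 + 2 * NA * (1 + 2 * NB) / (1 + NA + NB) < Real.cosh (2 * r) := by
  have hs : (0:ℝ) < 1 + NA + NB := by linarith
  have hC : 1 ≤ Real.cosh (2 * r) := Real.one_le_cosh _
  have hb : 0 < (1 + NA + NB) * Real.cosh (2 * r) / 2 - (NA - NB) / 2 := by nlinarith
  have hsinh : Real.sinh (2 * r) ^ 2 = Real.cosh (2 * r) ^ 2 - 1 := by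
    have := Real.cosh_sq_sub_sinh_sq (2 * r); linarith
  have h1 : (((1 + NA + NB) * Real.cosh (2 * r) / 2 + (NA - NB) / 2) -
        ((1 + NA + NB) * Real.sinh (2 * r) / 2) ^ 2 /
          ((1 + NA + NB) * Real.cosh (2 * r) / 2 - (NA - NB) / 2) < 1 / 2) ↔
      (((1 + NA + NB) * Real.cosh (2 * r) / 2 + (NA - NB) / 2) - 1 / 2) *
        ((1 + NA + NB) * Real.cosh (2 * r) / 2 - (NA - NB) / 2) <
        ((1 + NA + NB) * Real.sinh (2 * r) / 2) ^ 2 := by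
    rw [sub_lt_iff_lt_add, ← sub_lt_iff_lt_add', lt_div_iff₀ hb]
  have h2 : (1 + 2 * NA * (1 + 2 * NB) / (1 + NA + NB) < Real.cosh (2 * r)) ↔
      (1 + NA + NB) + 2 * NA * (1 + 2 * NB) < (1 + NA + NB) * Real.cosh (2 * r) := by
    rw [show (1 : ℝ) + 2 * NA * (1 + 2 * NB) / (1 + NA + NB) =
      ((1 + NA + NB) + 2 * NA * (1 + 2 * NB)) / (1 + NA + NB) by field_simp,
      div_lt_iff₀ hs]
    constructor <;> intro h <;> nlinarith
  have key : (((1 + NA + NB) * Real.cosh (2 * r) / 2 + (NA - NB) / 2) - 1 / 2) *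
        ((1 + NA + NB) * Real.cosh (2 * r) / 2 - (NA - NB) / 2) -
        ((1 + NA + NB) * Real.sinh (2 * r) / 2) ^ 2 =
      ((1 + NA + NB) + 2 * NA * (1 + 2 * NB) - (1 + NA + NB) * Real.cosh (2 * r)) / 4 := by
    linear_combination (-(1 + NA + NB) ^ 2 / 4) * hsinh
  rw [h1, h2]
  constructor <;> intro h <;> linarith
end

section
/- For each integer n > 2, the 4×4 matrix with canonical-form blocks a = (n+2)/(2n+1), b = n, c₁ = 1/sqrt(2n), c₂ = -sqrt(2n/(2n+1)) is positive definite, satisfies the two-mode uncertainty relation σ + (i/2)(ω ⊕ ω) ≥ 0, and satisfies the weak nonclassical steering condition a - max(c₁²,c₂²)/b < 1/2. -/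
open Matrix Complex ComplexOrder

noncomputable section

/-- Canonical-form two-mode covariance matrix with blocks `a·I₂`, `b·I₂`, `diag(c₁,c₂)`. -/
def canonicalCM (a b c₁ c₂ : ℝ) : Matrix (Fin 4) (Fin 4) ℝ :=
  !![a, 0, c₁, 0;
     0, a, 0, c₂;
     c₁, 0, b, 0;
     0, c₂, 0, b]

/-- The two-mode symplectic form `Ω = ω ⊕ ω`, `ω = [[0,1],[-1,0]]`. -/
def symplecticForm2 : Matrix (Fin 4) (Fin 4) ℝ :=
  !![0, 1, 0, 0;
     -1, 0, 0, 0;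
     0, 0, 0, 1;
     0, 0, -1, 0]

/-!
On `v = u + i t` the Hermitian form of `σ + (i/2)Ω` is `uσu + tσt - uΩt`, which regroups as
`Q(u₀, t₁, u₂, t₃) + Q(t₀, -u₁, t₂, -u₃)` for a single real quadratic form `Q` on `ℝ⁴`. Both
`σ > 0` and `Q ≥ 0` reduce to discriminant conditions on binary forms: `σ` splits into the
`(q_A, q_B)` and `(p_A, p_B)` blocks, and for `Q` one completes the squares in the couplings
`c₁`, `c₂` with weights `p`, `r`, leaving one binary form in the `A`-mode and one in the `B`-mode.
For the family the steering quantity is `a - c₂² / b = n / (2n + 1)`.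
-/

lemma four_mul_binary_form (A B C u v : ℝ) :
    4 * A * (A * u ^ 2 + C * u * v + B * v ^ 2) =
      (2 * A * u + C * v) ^ 2 + (4 * A * B - C ^ 2) * v ^ 2 := by
  ring

lemma binary_form_nonneg {A B C : ℝ} (hA : 0 < A) (h : C ^ 2 ≤ 4 * A * B) (u v : ℝ) :
    0 ≤ A * u ^ 2 + C * u * v + B * v ^ 2 := by
  have hdisc := sub_nonneg.2 h
  have key : 0 ≤ 4 * A * (A * u ^ 2 + C * u * v + B * v ^ 2) := by
    rw [four_mul_binary_form]
    positivity
  exact nonneg_of_mul_nonneg_right key (by positivity)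

lemma binary_form_pos {A B C : ℝ} (hA : 0 < A) (h : C ^ 2 < 4 * A * B) {u v : ℝ}
    (huv : u ≠ 0 ∨ v ≠ 0) : 0 < A * u ^ 2 + C * u * v + B * v ^ 2 := by
  have hdisc := sub_pos.2 h
  have key : 0 < 4 * A * (A * u ^ 2 + C * u * v + B * v ^ 2) := by
    rw [four_mul_binary_form]
    rcases eq_or_ne v 0 with rfl | hv
    · have hu := huv.resolve_right (not_not.2 rfl)
      simp only [mul_zero, add_zero, ne_eq, OfNat.ofNat_ne_zero, not_false_eq_true, zero_pow]
      positivity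
    · positivity
  exact pos_of_mul_pos_right key (by positivity)

def uncertaintyMatrix (σ : Matrix (Fin 4) (Fin 4) ℝ) : Matrix (Fin 4) (Fin 4) ℂ :=
  σ.map ofReal + (I / 2) • symplecticForm2.map ofReal

def uncertaintyForm (a b c₁ c₂ w x y z : ℝ) : ℝ :=
  a * (w ^ 2 + x ^ 2) + b * (y ^ 2 + z ^ 2) + 2 * c₁ * w * y + 2 * c₂ * x * z - w * x - y * z

section CanonicalForm

variable {a b c₁ c₂ : ℝ}

lemma isHermitian_canonicalCM : (canonicalCM a b c₁ c₂).IsHermitian := by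
  ext i j
  fin_cases i <;> fin_cases j <;> simp [canonicalCM]

lemma dotProduct_canonicalCM_mulVec (v : Fin 4 → ℝ) :
    v ⬝ᵥ (canonicalCM a b c₁ c₂ *ᵥ v) =
      (a * v 0 ^ 2 + 2 * c₁ * v 0 * v 2 + b * v 2 ^ 2) +
        (a * v 1 ^ 2 + 2 * c₂ * v 1 * v 3 + b * v 3 ^ 2) := by
  simp [canonicalCM, dotProduct, mulVec, Fin.sum_univ_four]
  ring

theorem canonicalCM_posDef (ha : 0 < a) (h₁ : c₁ ^ 2 < a * b) (h₂ : c₂ ^ 2 < a * b) :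
    (canonicalCM a b c₁ c₂).PosDef := by
  refine .of_dotProduct_mulVec_pos isHermitian_canonicalCM fun v hv => ?_
  have h₁' : (2 * c₁) ^ 2 < 4 * a * b := by linarith
  have h₂' : (2 * c₂) ^ 2 < 4 * a * b := by linarith
  rw [star_trivial, dotProduct_canonicalCM_mulVec]
  have hv' : (v 0 ≠ 0 ∨ v 2 ≠ 0) ∨ (v 1 ≠ 0 ∨ v 3 ≠ 0) := by
    by_contra! h
    exact hv (by ext i; fin_cases i <;> simp [h])
  rcases hv' with h | h
  · exact add_pos_of_pos_of_nonneg (binary_form_pos ha h₁' h) (binary_form_nonneg ha h₂'.le _ _)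
  · exact add_pos_of_nonneg_of_pos (binary_form_nonneg ha h₁'.le _ _) (binary_form_pos ha h₂' h)

lemma isHermitian_uncertaintyMatrix_canonicalCM :
    (uncertaintyMatrix (canonicalCM a b c₁ c₂)).IsHermitian := by
  ext i j
  fin_cases i <;> fin_cases j <;>
    simp [uncertaintyMatrix, canonicalCM, symplecticForm2, Complex.ext_iff] <;> norm_num

lemma dotProduct_uncertaintyMatrix_canonicalCM_mulVec (v : Fin 4 → ℂ) :
    star v ⬝ᵥ (uncertaintyMatrix (canonicalCM a b c₁ c₂) *ᵥ v) =
      ↑(uncertaintyForm a b c₁ c₂ (v 0).re (v 1).im (v 2).re (v 3).im +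
        uncertaintyForm a b c₁ c₂ (v 0).im (-(v 1).re) (v 2).im (-(v 3).re)) := by
  rw [Complex.ext_iff, ofReal_re, ofReal_im]
  simp [uncertaintyMatrix, canonicalCM, symplecticForm2, uncertaintyForm, dotProduct, mulVec,
    Fin.sum_univ_four]
  constructor <;> ring

theorem posSemidef_uncertaintyMatrix_canonicalCM
    (h : ∀ w x y z, 0 ≤ uncertaintyForm a b c₁ c₂ w x y z) :
    (uncertaintyMatrix (canonicalCM a b c₁ c₂)).PosSemidef :=
  .of_dotProduct_mulVec_nonneg isHermitian_uncertaintyMatrix_canonicalCM fun v => by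
    rw [dotProduct_uncertaintyMatrix_canonicalCM_mulVec]
    exact zero_le_real.2 (add_nonneg (h ..) (h ..))

theorem uncertaintyForm_nonneg {p r : ℝ} (hp : 0 < p) (hr : 0 < r) (hap : p < a)
    (ha : 1 ≤ 4 * (a - p) * (a - r)) (hbp : c₁ ^ 2 / p < b)
    (hb : 1 ≤ 4 * (b - c₁ ^ 2 / p) * (b - c₂ ^ 2 / r)) (w x y z : ℝ) :
    0 ≤ uncertaintyForm a b c₁ c₂ w x y z := by
  have hsq {s : ℝ} (c : ℝ) (hs : 0 < s) : (2 * c) ^ 2 ≤ 4 * s * (c ^ 2 / s) :=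
    le_of_eq (by field_simp; ring)
  have hwy := binary_form_nonneg hp (hsq c₁ hp) w y
  have hxz := binary_form_nonneg hr (hsq c₂ hr) x z
  have hwx := binary_form_nonneg (C := -1) (sub_pos.2 hap) (by rwa [neg_one_sq]) w x
  have hyz := binary_form_nonneg (C := -1) (sub_pos.2 hbp) (by rwa [neg_one_sq]) y z
  have split : uncertaintyForm a b c₁ c₂ w x y z =
      (p * w ^ 2 + 2 * c₁ * w * y + c₁ ^ 2 / p * y ^ 2) +
        (r * x ^ 2 + 2 * c₂ * x * z + c₂ ^ 2 / r * z ^ 2) +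
        ((a - p) * w ^ 2 + -1 * w * x + (a - r) * x ^ 2) +
        ((b - c₁ ^ 2 / p) * y ^ 2 + -1 * y * z + (b - c₂ ^ 2 / r) * z ^ 2) := by
    unfold uncertaintyForm
    ring
  linarith

end CanonicalForm

section Family

variable {m c₁ c₂ : ℝ}

theorem family_posDef (hm : 3 ≤ m) (hc₁ : c₁ ^ 2 = 1 / (2 * m))
    (hc₂ : c₂ ^ 2 = 2 * m / (2 * m + 1)) :
    (canonicalCM ((m + 2) / (2 * m + 1)) m c₁ c₂).PosDef := by
  have hab : (m + 2) / (2 * m + 1) * m = (m ^ 2 + 2 * m) / (2 * m + 1) := by ring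
  refine canonicalCM_posDef (by positivity) ?_ ?_
  · rw [hc₁, hab, div_lt_div_iff₀ (by positivity) (by positivity)]
    nlinarith
  · rw [hc₂, hab, div_lt_div_iff_of_pos_right (by positivity)]
    nlinarith

theorem family_uncertaintyForm_nonneg (hm : 3 ≤ m) (hc₁ : c₁ ^ 2 = 1 / (2 * m))
    (hc₂ : c₂ ^ 2 = 2 * m / (2 * m + 1)) (w x y z : ℝ) :
    0 ≤ uncertaintyForm ((m + 2) / (2 * m + 1)) m c₁ c₂ w x y z := by
  have hD : 0 < 2 * m + 1 := by linarith
  have hp : c₁ ^ 2 / (2 / (3 * (2 * m + 1))) = 3 * (2 * m + 1) / (4 * m) := by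
    rw [hc₁]; field_simp; ring
  have hr : c₂ ^ 2 / (13 / (6 * (2 * m + 1))) = 12 * m / 13 := by
    rw [hc₂]; field_simp; ring
  -- `p + r` must stay below `2 (a - 1/2) = 3 / (2m + 1)` and `r` above `c₂² / b = 2 / (2m + 1)`.
  refine uncertaintyForm_nonneg (p := 2 / (3 * (2 * m + 1))) (r := 13 / (6 * (2 * m + 1)))
    (by positivity) (by positivity) ?_ ?_ ?_ ?_ w x y z
  · rw [div_lt_div_iff₀ (by positivity) hD]
    nlinarith
  · rw [show 4 * ((m + 2) / (2 * m + 1) - 2 / (3 * (2 * m + 1))) *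
        ((m + 2) / (2 * m + 1) - 13 / (6 * (2 * m + 1))) =
        2 * (3 * m + 4) * (6 * m - 1) / (9 * (2 * m + 1) ^ 2) by field_simp; ring,
      le_div_iff₀ (by positivity)]
    nlinarith
  · rw [hp, div_lt_iff₀ (by positivity)]
    nlinarith
  · rw [hp, hr, show 4 * (m - 3 * (2 * m + 1) / (4 * m)) * (m - 12 * m / 13) =
        (4 * m ^ 2 - 6 * m - 3) / 13 by field_simp; ring, le_div_iff₀ (by norm_num)]
    nlinarith

theorem family_steering (hm : 3 ≤ m) :
    (m + 2) / (2 * m + 1) - max (1 / (2 * m)) (2 * m / (2 * m + 1)) / m < 1 / 2 := by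
  have hmax : 1 / (2 * m) ≤ 2 * m / (2 * m + 1) := by
    rw [div_le_div_iff₀ (by positivity) (by positivity)]
    nlinarith
  rw [max_eq_right hmax, show (m + 2) / (2 * m + 1) - 2 * m / (2 * m + 1) / m = m / (2 * m + 1) by
    field_simp; ring, div_lt_iff₀ (by positivity)]
  linarith

end Family

/-- for each integer `n > 2`, the canonical-form covariance matrix with
`a = (n+2)/(2n+1)`, `b = n`, `c₁ = 1/√(2n)`, `c₂ = -√(2n/(2n+1))` is positive definite,
satisfies the two-mode uncertainty relation `σ + (i/2)Ω ≥ 0`, and satisfies the weak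
nonclassical steering condition `a - max(c₁²,c₂²)/b < 1/2`. -/
theorem WNS_family_small_discord (n : ℤ) (hn : 2 < n) :
    (canonicalCM ((n + 2) / (2 * n + 1)) n (1 / Real.sqrt (2 * n))
        (-Real.sqrt (2 * n / (2 * n + 1)))).PosDef ∧
    (((canonicalCM ((n + 2) / (2 * n + 1)) n (1 / Real.sqrt (2 * n))
          (-Real.sqrt (2 * n / (2 * n + 1)))).map (Complex.ofReal) +
        (Complex.I / 2) • (symplecticForm2.map (Complex.ofReal))).PosSemidef) ∧
    ((n : ℝ) + 2) / (2 * n + 1) -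
        max ((1 / Real.sqrt (2 * n)) ^ 2) ((-Real.sqrt (2 * n / (2 * n + 1))) ^ 2) / n
      < 1 / 2 := by
  have hm : (3 : ℝ) ≤ n := by exact_mod_cast hn
  have hc₁ : (1 / Real.sqrt (2 * n)) ^ 2 = 1 / (2 * n) := by
    rw [div_pow, one_pow, Real.sq_sqrt (by positivity)]
  have hc₂ : (-Real.sqrt (2 * n / (2 * n + 1))) ^ 2 = 2 * n / (2 * n + 1) := by
    rw [neg_sq, Real.sq_sqrt (by positivity)]
  rw [hc₁, hc₂]
  exact ⟨family_posDef hm hc₁ hc₂,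
    posSemidef_uncertaintyMatrix_canonicalCM (family_uncertaintyForm_nonneg hm hc₁ hc₂),
    family_steering hm⟩
end
end

section
/- With α > β ≥ 0, a, c as above and assuming (c² - aα)² > a²β² and a(α² - β²) > αc², the conditional purity and squeezing parameters defined by det σ_c = 1/(4μ_c²) and tr σ_c = 1/(μ_c μ_sc) are μ_c = (1/2)sqrt((α² - β²)/((c² - aα)² - a²β²)) and μ_sc = sqrt((α² - β²)((c² - aα)² - a²β²))/(a(α² - β²) - αc²). -/
open Matrix Real

noncomputable section

/-! The phase φ drops out of both invariants of σ_c (by sin²φ + cos²φ = 1): with S = α² - β²,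
det σ_c = ((c² - aα)² - a²β²) / S and tr σ_c = 2(aS - αc²) / S. Solving det σ_c = 1/(4μ_c²) for
μ_c > 0 and then tr σ_c = 1/(μ_c μ_sc) for μ_sc gives the two formulas. -/

/-- Conditional covariance matrix of mode A of a TMST after a Gaussian measurement on
mode B, parametrized by `α > β ≥ 0` and phase `φ`. -/
def condCM (a c α β φ : ℝ) : Matrix (Fin 2) (Fin 2) ℝ :=
  a • (1 : Matrix (Fin 2) (Fin 2) ℝ) -
    (c ^ 2 / (α ^ 2 - β ^ 2)) •
      !![α - β * Real.cos φ, -(β * Real.sin φ);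
         -(β * Real.sin φ), α + β * Real.cos φ]

theorem condCM_det (a c α β φ : ℝ) (hS : α ^ 2 - β ^ 2 ≠ 0) :
    (condCM a c α β φ).det = ((c ^ 2 - a * α) ^ 2 - a ^ 2 * β ^ 2) / (α ^ 2 - β ^ 2) := by
  rw [condCM, eq_div_iff hS]
  simp only [smul_of, smul_cons, smul_eq_mul, mul_neg, smul_empty, det_fin_two, Fin.isValue,
    Matrix.sub_apply, Matrix.smul_apply, one_apply_eq, mul_one, of_apply, cons_val', cons_val_zero,
    cons_val_fin_one, cons_val_one, ne_eq, zero_ne_one, not_false_eq_true, one_apply_ne, mul_zero,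
    sub_neg_eq_add, zero_add, one_ne_zero]
  field_simp
  linear_combination -(c ^ 4 * β ^ 2) * sin_sq_add_cos_sq φ

theorem condCM_trace (a c α β φ : ℝ) (hS : α ^ 2 - β ^ 2 ≠ 0) :
    (condCM a c α β φ).trace = 2 * (a * (α ^ 2 - β ^ 2) - α * c ^ 2) / (α ^ 2 - β ^ 2) := by
  simp only [condCM, trace_sub, trace_smul, trace_one, Fintype.card_fin, Nat.cast_ofNat,
    trace_fin_two, smul_of, smul_cons, smul_eq_mul, mul_neg, smul_empty, Fin.isValue, of_apply,
    cons_val', cons_val_zero, cons_val_fin_one, cons_val_one]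
  field_simp
  ring

theorem Real.sqrt_div_mul_self (x : ℝ) {y : ℝ} (hy : 0 < y) : √(x / y) * y = √(x * y) :=
  calc √(x / y) * y = √(x / y) * √(y ^ 2) := by rw [sqrt_sq hy.le]
    _ = √(x / y * y ^ 2) := (sqrt_mul' _ (sq_nonneg y)).symm
    _ = √(x * y) := by congr 1; field_simp

theorem eq_one_div_two_mul_sqrt_of_eq_one_div_four_mul_sq {μ d : ℝ} (hμ : 0 < μ)
    (h : d = 1 / (4 * μ ^ 2)) : μ = 1 / (2 * √d) := by
  have : √d = 1 / (2 * μ) := by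
    rw [h, ← sqrt_sq (by positivity : 0 ≤ 1 / (2 * μ))]
    ring_nf
  rw [this]
  field_simp

theorem condCM_purity_squeezing_general (a c α β φ μc μsc : ℝ)
    (hβ : 0 ≤ β) (hαβ : β < α)
    (hμc : 0 < μc)
    (hdet : (condCM a c α β φ).det = 1 / (4 * μc ^ 2))
    (htr : (condCM a c α β φ).trace = 1 / (μc * μsc)) :
    μc = (1 / 2) * Real.sqrt ((α ^ 2 - β ^ 2) / ((c ^ 2 - a * α) ^ 2 - a ^ 2 * β ^ 2)) ∧
    μsc = Real.sqrt ((α ^ 2 - β ^ 2) * ((c ^ 2 - a * α) ^ 2 - a ^ 2 * β ^ 2)) /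
        (a * (α ^ 2 - β ^ 2) - α * c ^ 2) := by
  have hS : 0 < α ^ 2 - β ^ 2 := by nlinarith
  rw [condCM_det a c α β φ hS.ne'] at hdet
  rw [condCM_trace a c α β φ hS.ne'] at htr
  set S := α ^ 2 - β ^ 2
  set N := (c ^ 2 - a * α) ^ 2 - a ^ 2 * β ^ 2
  set T := a * S - α * c ^ 2
  have hμc_eq := eq_one_div_two_mul_sqrt_of_eq_one_div_four_mul_sq hμc hdet
  have hμsc_eq : μsc = 1 / (μc * (2 * T / S)) := by
    rw [htr]; field_simp
  refine ⟨?_, ?_⟩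
  · rw [hμc_eq, ← inv_div N S, sqrt_inv]
    ring
  · rw [hμsc_eq, hμc_eq, mul_comm S N, ← sqrt_div_mul_self N hS]
    field_simp

/-- if the conditional purity `μc > 0` and squeezing `μsc > 0` are defined
by `det σc = 1/(4μc²)` and `tr σc = 1/(μc μsc)`, then, under the stated positivity
conditions, `μc = (1/2)√((α² - β²)/((c² - aα)² - a²β²))` and
`μsc = √((α² - β²)((c² - aα)² - a²β²))/(a(α² - β²) - αc²)`. -/
theorem condCM_purity_squeezing (a c α β φ μc μsc : ℝ)
    (hβ : 0 ≤ β) (hαβ : β < α)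
    (h₁ : a ^ 2 * β ^ 2 < (c ^ 2 - a * α) ^ 2)
    (h₂ : α * c ^ 2 < a * (α ^ 2 - β ^ 2))
    (hμc : 0 < μc) (hμsc : 0 < μsc)
    (hdet : (condCM a c α β φ).det = 1 / (4 * μc ^ 2))
    (htr : (condCM a c α β φ).trace = 1 / (μc * μsc)) :
    μc = (1 / 2) * Real.sqrt ((α ^ 2 - β ^ 2) / ((c ^ 2 - a * α) ^ 2 - a ^ 2 * β ^ 2)) ∧
    μsc = Real.sqrt ((α ^ 2 - β ^ 2) * ((c ^ 2 - a * α) ^ 2 - a ^ 2 * β ^ 2)) /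
        (a * (α ^ 2 - β ^ 2) - α * c ^ 2) :=
  condCM_purity_squeezing_general a c α β φ μc μsc hβ hαβ hμc hdet htr
end
end
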